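/- Let {𝒟_j}_{j∈ℤ} be a dyadic grid on S with 𝒟 = ∪_j 𝒟_j. There exists a positive constant K, depending only on n, such that for every locally integrable function f on S, for all positive constants c and b with b < 1, and for every α > 0, one has ρ({x ∈ S : ℳ_𝒟 f(x) > α and f♯_𝒟(x) ≤ cα}) ≤ K·(c/(1−b))·ρ({x ∈ S : ℳ_𝒟 f(x) > bα}). -/

import Mathlib

open MeasureTheory Set Filter
open scoped ENNReal NNReal Topology

noncomputable section

/-- The `ax+b`-group `S = ℝⁿ ⋉ ℝ`, as a measure space with its right Haar
measure `ρ`, which is Lebesgue measure `dx dt` on `ℝⁿ × ℝ`. -/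
abbrev Sp (n : ℕ) : Type := (Fin n → ℝ) × ℝ

/-- `Q` is a dyadic cube in `ℝⁿ` with side length `L` and center `c`. -/
def IsDyadicCube (n : ℕ) (Q : Set (Fin n → ℝ)) (L : ℝ) (c : Fin n → ℝ) : Prop :=
  ∃ (k : ℤ) (m : Fin n → ℤ), L = 2 ^ k ∧
    Q = {x | ∀ i, (m i : ℝ) * 2 ^ k ≤ x i ∧ x i < ((m i : ℝ) + 1) * 2 ^ k} ∧
    c = fun i => ((m i : ℝ) + 1 / 2) * 2 ^ k

/-- Admissibility of the parameters `(Q, L, c, t, r)` of a Calderón–Zygmund set: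
`Q` is a dyadic cube with side length `L` and center `c`, `r > 0`, and
`e² eᵗ r ≤ L < e⁸ eᵗ r` if `r < 1`, while `eᵗ e^{2r} ≤ L < eᵗ e^{8r}` if `r ≥ 1`. -/
def CZParam (n : ℕ) (Q : Set (Fin n → ℝ)) (L : ℝ) (c : Fin n → ℝ) (t r : ℝ) : Prop :=
  IsDyadicCube n Q L c ∧ 0 < r ∧
    (r < 1 → Real.exp 2 * Real.exp t * r ≤ L ∧ L < Real.exp 8 * Real.exp t * r) ∧
    (1 ≤ r → Real.exp t * Real.exp (2 * r) ≤ L ∧ L < Real.exp t * Real.exp (8 * r))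

/-- The set `Q × [t - r, t + r)` in `S`. -/
def czSet (n : ℕ) (Q : Set (Fin n → ℝ)) (t r : ℝ) : Set (Sp n) :=
  Q ×ˢ Set.Ico (t - r) (t + r)

/-- `R` is a Calderón–Zygmund set, i.e. a member of the family `ℛ`. -/
def IsCZSet (n : ℕ) (R : Set (Sp n)) : Prop :=
  ∃ Q L c t r, CZParam n Q L c t r ∧ R = czSet n Q t r

/-- Inverse hyperbolic cosine. -/
def arcoshR (x : ℝ) : ℝ := Real.log (x + Real.sqrt (x ^ 2 - 1))

/-- The left-invariant Riemannian (hyperbolic) metric on `S`, given by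
`cosh d((x,t),(x',t')) = (e^{t'-t} + e^{t-t'} + e^{-t-t'} |x-x'|²) / 2`. -/
def hypDist (n : ℕ) (p q : Sp n) : ℝ :=
  arcoshR ((Real.exp (q.2 - p.2) + Real.exp (p.2 - q.2) +
    Real.exp (-p.2 - q.2) * (∑ i, (p.1 i - q.1 i) ^ 2)) / 2)

/-- The open ball of center `p` and radius `r` for the hyperbolic metric. -/
def hypBall (n : ℕ) (p : Sp n) (r : ℝ) : Set (Sp n) := {q | hypDist n p q < r}

/-- The maximal function associated with a family `𝒜` of subsets of `S`:
`x ↦ sup { ρ(R)⁻¹ ∫_R |f| dρ : R ∈ 𝒜, x ∈ R }`. -/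
def maximalFn (n : ℕ) (𝒜 : Set (Set (Sp n))) (f : Sp n → ℝ) (x : Sp n) : ℝ≥0∞ :=
  ⨆ R ∈ 𝒜, ⨆ (_ : x ∈ R), (volume R)⁻¹ * ∫⁻ y in R, ‖f y‖₊ ∂volume

/-- The sharp maximal function associated with a family `𝒜` of subsets of `S`:
`x ↦ sup { ρ(R)⁻¹ ∫_R |f - f_R| dρ : R ∈ 𝒜, x ∈ R }`, where `f_R = ρ(R)⁻¹ ∫_R f dρ`. -/
def sharpFn (n : ℕ) (𝒜 : Set (Set (Sp n))) (f : Sp n → ℝ) (x : Sp n) : ℝ≥0∞ :=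
  ⨆ R ∈ 𝒜, ⨆ (_ : x ∈ R), (volume R)⁻¹ *
    ∫⁻ y in R, ENNReal.ofReal |f y - (volume R).toReal⁻¹ * ∫ z in R, f z ∂volume| ∂volume

/-- The `L^p`-norm (`p ∈ (0,∞]`) of an `ℝ≥0∞`-valued function. -/
def lpNormE {α : Type*} [MeasurableSpace α] (g : α → ℝ≥0∞) (p : ℝ≥0∞)
    (μ : Measure α) : ℝ≥0∞ :=
  if p = ∞ then essSup g μ else (∫⁻ x, g x ^ p.toReal ∂μ) ^ (1 / p.toReal)

/-- `M` is a parent of `R`: both are Calderón–Zygmund sets, `M` can be decomposed into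
`k` pairwise disjoint Calderón–Zygmund sets (`k = 2` or `k = 2ⁿ`) one of which is `R`,
and `(3/2) ρ(R) ≤ ρ(M) ≤ max{3, 2ⁿ} ρ(R)`. -/
def IsParent (n : ℕ) (M R : Set (Sp n)) : Prop :=
  IsCZSet n M ∧ IsCZSet n R ∧
    (∃ k : ℕ, (k = 2 ∨ k = 2 ^ n) ∧ ∃ Rs : Fin k → Set (Sp n),
      (∀ i, IsCZSet n (Rs i)) ∧ Pairwise (Function.onFun Disjoint Rs) ∧
      M = ⋃ i, Rs i ∧ ∃ i, Rs i = R) ∧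
    (3 / 2 : ℝ≥0∞) * volume R ≤ volume M ∧
    volume M ≤ (max 3 (2 ^ n) : ℕ) * volume R

/-- A dyadic grid on `S`: a collection `{𝒟_j}_{j ∈ ℤ}` of partitions of `S` into
pairwise disjoint Calderón–Zygmund sets with the nesting, parent, splitting and
limiting properties (i)–(v) of Theorem 3.1. -/
def IsDyadicGrid (n : ℕ) (D : ℤ → Set (Set (Sp n))) : Prop :=
  (∀ j, ∀ R ∈ D j, IsCZSet n R) ∧
  (∀ j, (D j).PairwiseDisjoint id) ∧
  (∀ j, ⋃₀ D j = Set.univ) ∧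
  (∀ l k : ℤ, l ≤ k → ∀ R ∈ D l, ∀ R' ∈ D k, R ⊆ R' ∨ R ∩ R' = ∅) ∧
  (∀ j, ∀ R ∈ D j, ∃! R', R' ∈ D (j + 1) ∧ R ⊆ R') ∧
  (∀ j, ∀ R ∈ D j, ∀ R' ∈ D (j + 1), R ⊆ R' → volume R' ≤ 2 ^ n * volume R) ∧
  (∀ j, ∀ R ∈ D j, ∃ k : ℕ, (k = 2 ∨ k = 2 ^ n) ∧ ∃ Rs : Fin k → Set (Sp n),
    (∀ i, Rs i ∈ D (j - 1)) ∧ Pairwise (Function.onFun Disjoint Rs) ∧ R = ⋃ i, Rs i ∧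
    ∀ i, volume R / 2 ^ n ≤ volume (Rs i) ∧ volume (Rs i) ≤ (2 / 3 : ℝ≥0∞) * volume R) ∧
  (∀ x : Sp n, ∀ Rx : ℤ → Set (Sp n), (∀ j, Rx j ∈ D j ∧ x ∈ Rx j) →
    Tendsto (fun j => volume (Rx j)) atBot (nhds 0) ∧
    Tendsto (fun j => volume (Rx j)) atTop (nhds ⊤))

/-- `a` is an `H¹`-atom supported in a set of the family `𝒜`: `a ∈ L¹` is supported in
some `R ∈ 𝒜`, `‖a‖_∞ ≤ ρ(R)⁻¹` and `∫_S a dρ = 0`. -/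
def IsAtomIn (n : ℕ) (𝒜 : Set (Set (Sp n))) (a : Sp n → ℂ) : Prop :=
  ∃ R ∈ 𝒜, Function.support a ⊆ R ∧
    (∀ᵐ x ∂(volume : Measure (Sp n)), ‖a x‖ ≤ (volume R).toReal⁻¹) ∧
    Integrable a volume ∧ ∫ x, a x ∂(volume : Measure (Sp n)) = 0

/-- `g = ∑_j lam_j a_j` is an atomic decomposition of `g` with atoms supported in sets of
the family `𝒜`: the `a_j` are atoms, `∑_j |lam_j| < ∞` and the series converges to `g`
in `L¹`. -/
def IsAtomicDecomp (n : ℕ) (𝒜 : Set (Set (Sp n))) (g : Sp n → ℂ)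
    (lam : ℕ → ℂ) (a : ℕ → Sp n → ℂ) : Prop :=
  Integrable g volume ∧ (∀ j, IsAtomIn n 𝒜 (a j)) ∧ Summable (fun j => ‖lam j‖) ∧
    Tendsto (fun N => ∫ x, ‖g x - ∑ j ∈ Finset.range N, lam j * a j x‖ ∂volume)
      atTop (nhds 0)

/-- The atomic `H¹`-norm of `g` associated with the family `𝒜`: the infimum of
`∑_j |lam_j|` over all atomic decompositions of `g` with atoms supported in sets of `𝒜`. -/
def H1Norm (n : ℕ) (𝒜 : Set (Set (Sp n))) (g : Sp n → ℂ) : ℝ :=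
  sInf {s : ℝ | ∃ lam a, IsAtomicDecomp n 𝒜 g lam a ∧ s = ∑' j, ‖lam j‖}

end

/-!
Calderón–Zygmund decomposition at height `bα`: if `{ℳ_𝒟 f > bα}` has finite measure, it is the
disjoint union of the maximal dyadic sets `R` on which `|f|` has average `> bα`; maximal sets exist
because strictly nested dyadic sets differ in measure by a factor at least `3/2`. The parent `M`
of such an `R` has `ρ(M) ≤ 2ⁿ ρ(R)` and `|f_M| ≤ bα`. If some point of `R` has `f♯_𝒟 ≤ cα`, then
`∫_M |f - f_M| ≤ cα ρ(M)`, while every point of `R` where `ℳ_𝒟 f > α` lies in a dyadic subset of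
`R` on which `|f - f_M|` has average `> (1 - b)α`. Summing over the maximal such subsets gives
`ρ(E ∩ R) ≤ 2ⁿ c/(1 - b) ρ(R)` for the left-hand set `E`, and summing over `R` gives the theorem
with `K = 2ⁿ`.
-/

theorem two_div_three_mul_lt_self {a : ℝ≥0∞} (h₀ : a ≠ 0) (h : a ≠ ∞) : 2 / 3 * a < a := by
  have h23 : (2 / 3 : ℝ≥0∞) < 1 := by
    rw [ENNReal.div_lt_iff (by norm_num) (by norm_num)]; norm_num
  simpa using ENNReal.mul_lt_mul_left h₀ h h23

section MeasureTheory

variable {α : Type*} [MeasurableSpace α]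

theorem Set.PairwiseDisjoint.countable_of_measure_pos {μ : Measure α} [SFinite μ]
    {ℳ : Set (Set α)} (hd : ℳ.PairwiseDisjoint id) (hm : ∀ s ∈ ℳ, MeasurableSet s)
    (hpos : ∀ s ∈ ℳ, 0 < μ s) : ℳ.Countable := by
  have h := Measure.countable_meas_pos_of_disjoint_iUnion (μ := μ)
    (As := ((↑) : ℳ → Set α)) (fun s => hm s s.2)
    (fun s t hst => hd s.2 t.2 (Subtype.coe_injective.ne hst))
  rw [show {s : ℳ | 0 < μ s} = univ from eq_univ_of_forall fun s => hpos s s.2,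
    countable_univ_iff] at h
  exact countable_coe_iff.1 h

theorem measure_sUnion_le_of_forall_le {μ ν : Measure α} {ℳ : Set (Set α)} (hc : ℳ.Countable)
    (hd : ℳ.PairwiseDisjoint id) (hm : ∀ s ∈ ℳ, MeasurableSet s) (h : ∀ s ∈ ℳ, μ s ≤ ν s) :
    μ (⋃₀ ℳ) ≤ ν (⋃₀ ℳ) := by
  rw [measure_sUnion hc hd hm, measure_sUnion hc hd hm]
  exact ENNReal.tsum_le_tsum fun s => h s s.2

theorem mul_measure_le_setLIntegral_of_le {μ : Measure α} {s : Set α} {g : α → ℝ≥0∞}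
    {β : ℝ≥0∞} (h : β ≤ (μ s)⁻¹ * ∫⁻ y in s, g y ∂μ) : β * μ s ≤ ∫⁻ y in s, g y ∂μ :=
  calc β * μ s ≤ (μ s)⁻¹ * μ s * ∫⁻ y in s, g y ∂μ := by
        rw [mul_right_comm]; exact mul_le_mul_left h _
    _ ≤ ∫⁻ y in s, g y ∂μ := mul_le_of_le_one_left' (ENNReal.inv_mul_le_one _)

theorem abs_setAverage_le {μ : Measure α} {s : Set α} {f : α → ℝ} {β : ℝ} (hβ : 0 ≤ β)
    (hs₀ : μ s ≠ 0) (hs : μ s ≠ ∞) (h : (μ s)⁻¹ * ∫⁻ y in s, ‖f y‖₊ ∂μ ≤ ENNReal.ofReal β) :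
    |(μ s).toReal⁻¹ * ∫ y in s, f y ∂μ| ≤ β := by
  have hlint : ∫⁻ y in s, ENNReal.ofReal ‖f y‖ ∂μ ≤ μ s * ENNReal.ofReal β := by
    simpa only [ofReal_norm, enorm_eq_nnnorm] using
      (ENNReal.inv_mul_le_iff hs₀ hs).1 h
  have hμ : 0 < (μ s).toReal := ENNReal.toReal_pos hs₀ hs
  rw [abs_mul, abs_inv, abs_of_pos hμ, inv_mul_le_iff₀ hμ, ← Real.norm_eq_abs]
  calc ‖∫ y in s, f y ∂μ‖ ≤ (∫⁻ y in s, ENNReal.ofReal ‖f y‖ ∂μ).toReal :=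
        norm_integral_le_lintegral_norm _
    _ ≤ (μ s * ENNReal.ofReal β).toReal :=
        ENNReal.toReal_mono (ENNReal.mul_ne_top hs ENNReal.ofReal_ne_top) hlint
    _ = (μ s).toReal * β := by rw [ENNReal.toReal_mul, ENNReal.toReal_ofReal hβ]

theorem setLAverage_nnnorm_le_add {μ : Measure α} {s : Set α} (hs₀ : μ s ≠ 0) (hs : μ s ≠ ∞)
    (f : α → ℝ) (a : ℝ) :
    (μ s)⁻¹ * ∫⁻ y in s, ‖f y‖₊ ∂μ ≤
      (μ s)⁻¹ * ∫⁻ y in s, ENNReal.ofReal |f y - a| ∂μ + ENNReal.ofReal |a| := by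
  have hpt : ∀ y, (‖f y‖₊ : ℝ≥0∞) ≤ ENNReal.ofReal |f y - a| + ENNReal.ofReal |a| := fun y => by
    rw [← enorm_eq_nnnorm, Real.enorm_eq_ofReal_abs, ← ENNReal.ofReal_add (abs_nonneg _)
      (abs_nonneg _)]
    exact ENNReal.ofReal_le_ofReal (by linarith [abs_sub_abs_le_abs_sub (f y) a])
  calc (μ s)⁻¹ * ∫⁻ y in s, ‖f y‖₊ ∂μ
      ≤ (μ s)⁻¹ * (∫⁻ y in s, ENNReal.ofReal |f y - a| ∂μ + ENNReal.ofReal |a| * μ s) := by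
        rw [← setLIntegral_const, ← lintegral_add_right _ measurable_const]
        exact mul_le_mul_right (lintegral_mono hpt) _
    _ = _ := by
        rw [mul_add, mul_left_comm, ENNReal.inv_mul_cancel hs₀ hs, mul_one]

end MeasureTheory

section CalderonZygmund

variable {n : ℕ}

namespace IsDyadicCube

variable {Q : Set (Fin n → ℝ)} {L : ℝ} {c : Fin n → ℝ}

theorem exists_eq_pi (hQ : IsDyadicCube n Q L c) :
    ∃ a : Fin n → ℝ, Q = univ.pi fun i => Ico (a i) (a i + L) := by
  obtain ⟨k, m, rfl, rfl, -⟩ := hQ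
  refine ⟨fun i => m i * 2 ^ k, ?_⟩
  ext x
  simp only [mem_ofPred_eq, Set.mem_pi, mem_univ, mem_Ico, forall_const, add_mul, one_mul]

theorem measurableSet (hQ : IsDyadicCube n Q L c) : MeasurableSet Q := by
  obtain ⟨a, rfl⟩ := hQ.exists_eq_pi
  exact MeasurableSet.univ_pi fun _ => measurableSet_Ico

theorem volume_eq (hQ : IsDyadicCube n Q L c) : volume Q = ENNReal.ofReal L ^ n := by
  obtain ⟨a, rfl⟩ := hQ.exists_eq_pi
  simp only [volume_pi_pi, Real.volume_Ico, add_sub_cancel_left, Finset.prod_const,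
    Finset.card_univ, Fintype.card_fin]

theorem side_pos (hQ : IsDyadicCube n Q L c) : 0 < L := by
  obtain ⟨k, m, rfl, -⟩ := hQ
  positivity

end IsDyadicCube

theorem volume_czSet {Q : Set (Fin n → ℝ)} {L : ℝ} {c : Fin n → ℝ} (hQ : IsDyadicCube n Q L c)
    (t r : ℝ) : volume (czSet n Q t r) = ENNReal.ofReal L ^ n * ENNReal.ofReal (2 * r) := by
  rw [czSet, Measure.volume_eq_prod, Measure.prod_prod, hQ.volume_eq, Real.volume_Ico]
  ring_nf

namespace IsCZSet

variable {R : Set (Sp n)}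

theorem measurableSet (h : IsCZSet n R) : MeasurableSet R := by
  obtain ⟨Q, L, c, t, r, ⟨hQ, -⟩, rfl⟩ := h
  exact hQ.measurableSet.prod measurableSet_Ico

theorem volume_pos (h : IsCZSet n R) : 0 < volume R := by
  obtain ⟨Q, L, c, t, r, ⟨hQ, hr, -⟩, rfl⟩ := h
  rw [volume_czSet hQ]
  exact ENNReal.mul_pos (pow_ne_zero _ (ENNReal.ofReal_pos.2 hQ.side_pos).ne')
    (ENNReal.ofReal_pos.2 (by positivity)).ne'

theorem volume_ne_top (h : IsCZSet n R) : volume R ≠ ∞ := by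
  obtain ⟨Q, L, c, t, r, ⟨hQ, -⟩, rfl⟩ := h
  rw [volume_czSet hQ]
  exact ENNReal.mul_ne_top (ENNReal.pow_ne_top ENNReal.ofReal_ne_top) ENNReal.ofReal_ne_top

theorem nonempty (h : IsCZSet n R) : R.Nonempty :=
  nonempty_of_measure_ne_zero h.volume_pos.ne'

end IsCZSet

end CalderonZygmund

def averageSuperlevel {α : Type*} [MeasureSpace α] (𝒜 : Set (Set α)) (g : α → ℝ≥0∞)
    (β : ℝ≥0∞) : Set (Set α) :=
  {R ∈ 𝒜 | β < (volume R)⁻¹ * ∫⁻ y in R, g y}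

section MaximalFunctions

variable {n : ℕ} {𝒜 : Set (Set (Sp n))} {f : Sp n → ℝ}

theorem setOf_lt_maximalFn (β : ℝ≥0∞) :
    {x | β < maximalFn n 𝒜 f x} = ⋃₀ averageSuperlevel 𝒜 (fun y => ‖f y‖₊) β := by
  ext x
  simp only [maximalFn, mem_ofPred_eq, lt_iSup_iff, exists_prop, mem_sUnion, averageSuperlevel]
  grind

theorem le_sharpFn {M : Set (Sp n)} (hM : M ∈ 𝒜) {x : Sp n} (hx : x ∈ M) :
    (volume M)⁻¹ * ∫⁻ y in M,
        ENNReal.ofReal |f y - (volume M).toReal⁻¹ * ∫ z in M, f z| ≤ sharpFn n 𝒜 f x :=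
  le_iSup₂_of_le M hM (le_iSup_of_le hx le_rfl)

end MaximalFunctions

namespace IsDyadicGrid

variable {n : ℕ} {D : ℤ → Set (Set (Sp n))} {R T T' M : Set (Sp n)}

theorem isCZSet (hD : IsDyadicGrid n D) (hR : R ∈ ⋃ j, D j) : IsCZSet n R := by
  obtain ⟨j, hj⟩ := mem_iUnion.1 hR
  exact hD.1 j R hj

theorem exists_mem (hD : IsDyadicGrid n D) (j : ℤ) (x : Sp n) : ∃ R ∈ D j, x ∈ R :=
  sUnion_eq_univ_iff.1 (hD.2.2.1 j) x

theorem subset_of_mem_of_le (hD : IsDyadicGrid n D) {l k : ℤ} (hlk : l ≤ k) (hR : R ∈ D l)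
    (hR' : T ∈ D k) {x : Sp n} (hxR : x ∈ R) (hxT : x ∈ T) : R ⊆ T :=
  (hD.2.2.2.1 l k hlk R hR T hR').resolve_right (nonempty_iff_ne_empty.1 ⟨x, hxR, hxT⟩)

theorem subset_or_subset (hD : IsDyadicGrid n D) (hR : R ∈ ⋃ j, D j) (hT : T ∈ ⋃ j, D j)
    {x : Sp n} (hxR : x ∈ R) (hxT : x ∈ T) : R ⊆ T ∨ T ⊆ R := by
  obtain ⟨l, hl⟩ := mem_iUnion.1 hR
  obtain ⟨k, hk⟩ := mem_iUnion.1 hT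
  rcases le_total l k with hlk | hkl
  · exact .inl (hD.subset_of_mem_of_le hlk hl hk hxR hxT)
  · exact .inr (hD.subset_of_mem_of_le hkl hk hl hxT hxR)

theorem volume_le_of_mem_pred (hD : IsDyadicGrid n D) {j : ℤ} (hR : R ∈ D (j - 1))
    (hM : M ∈ D j) (hRM : R ⊆ M) : volume R ≤ 2 / 3 * volume M := by
  obtain ⟨k, -, Rs, hRs, -, hM_eq, hvol⟩ := hD.2.2.2.2.2.2.1 j M hM
  obtain ⟨x, hx⟩ := (hD.1 _ R hR).nonempty
  obtain ⟨i, hxi⟩ := mem_iUnion.1 (hM_eq ▸ hRM hx)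
  rw [(hD.2.1 (j - 1)).elim_set hR (hRs i) x hx hxi]
  exact (hvol i).2

theorem exists_parent (hD : IsDyadicGrid n D) {j : ℤ} (hR : R ∈ D j) :
    ∃ M ∈ D (j + 1), R ⊂ M ∧ volume M ≤ 2 ^ n * volume R := by
  obtain ⟨M, ⟨hM, hRM⟩, -⟩ := hD.2.2.2.2.1 j R hR
  refine ⟨M, hM, ⟨hRM, fun hMR => ?_⟩, hD.2.2.2.2.2.1 j R hR M hM hRM⟩
  have hR' : R ∈ D (j + 1 - 1) := by rwa [add_sub_cancel_right]
  have hle := hD.volume_le_of_mem_pred hR' hM hRM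
  rw [hRM.antisymm hMR] at hle
  exact (two_div_three_mul_lt_self (hD.1 _ M hM).volume_pos.ne'
    (hD.1 _ M hM).volume_ne_top).not_ge hle

theorem volume_le_of_ssubset (hD : IsDyadicGrid n D) (hT : T ∈ ⋃ j, D j)
    (hT' : T' ∈ ⋃ j, D j) (hTT' : T ⊂ T') : volume T ≤ 2 / 3 * volume T' := by
  obtain ⟨k, hk⟩ := mem_iUnion.1 hT
  obtain ⟨k', hk'⟩ := mem_iUnion.1 hT'
  obtain ⟨x, hx⟩ := (hD.1 k T hk).nonempty
  have hkk' : k < k' := by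
    by_contra! hle
    exact hTT'.2 (hD.subset_of_mem_of_le hle hk' hk (hTT'.1 hx) hx)
  obtain ⟨P, hP, hxP⟩ := hD.exists_mem (k' - 1) x
  calc volume T ≤ volume P := measure_mono (hD.subset_of_mem_of_le (by omega) hk hP hx hxP)
    _ ≤ 2 / 3 * volume T' :=
      hD.volume_le_of_mem_pred hP hk' (hD.subset_of_mem_of_le (by omega) hP hk' hxP (hTT'.1 hx))

theorem sUnion_subset_sUnion_maximal (hD : IsDyadicGrid n D) {S : Set (Set (Sp n))}
    (hS : S ⊆ ⋃ j, D j) {V : ℝ≥0∞} (hV : V ≠ ∞) (hSV : ∀ T ∈ S, volume T ≤ V) :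
    ⋃₀ S ⊆ ⋃₀ {T | Maximal (· ∈ S) T} := by
  rintro x ⟨R, hR, hxR⟩
  set s := ⨆ T ∈ S, ⨆ (_ : R ⊆ T), volume T
  have le_s : ∀ T ∈ S, R ⊆ T → volume T ≤ s := fun T hT hRT =>
    le_iSup₂_of_le T hT (le_iSup_of_le hRT le_rfl)
  have hs₀ : s ≠ 0 := ((hD.isCZSet (hS hR)).volume_pos.trans_le (le_s R hR subset_rfl)).ne'
  have hs : s ≠ ∞ := ne_top_of_le_ne_top hV (iSup₂_le fun T hT => iSup_le fun _ => hSV T hT)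
  -- a set of volume larger than `2/3 · s` cannot be strictly contained in another one
  obtain ⟨T, hT, hRT, hTs⟩ : ∃ T ∈ S, R ⊆ T ∧ 2 / 3 * s < volume T := by
    simpa only [s, lt_iSup_iff, exists_prop] using two_div_three_mul_lt_self hs₀ hs
  refine ⟨T, ⟨hT, fun T' hT' hTT' => ?_⟩, hRT hxR⟩
  by_contra hT'T
  have := hD.volume_le_of_ssubset (hS hT) (hS hT') ⟨hTT', hT'T⟩
  exact hTs.not_ge (this.trans (mul_le_mul_right (le_s T' hT' (hRT.trans hTT')) _))

theorem pairwiseDisjoint_maximal (hD : IsDyadicGrid n D) {S : Set (Set (Sp n))}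
    (hS : S ⊆ ⋃ j, D j) : {T | Maximal (· ∈ S) T}.PairwiseDisjoint id := by
  intro T hT T' hT' hne
  refine disjoint_left.2 fun x hxT hxT' => hne ?_
  rcases hD.subset_or_subset (hS hT.prop) (hS hT'.prop) hxT hxT' with h | h
  · exact hT.eq_of_subset hT'.prop h
  · exact (hT'.eq_of_subset hT.prop h).symm

theorem measure_sUnion_le_of_forall_le (hD : IsDyadicGrid n D) {ℳ : Set (Set (Sp n))}
    (hℳ : ℳ ⊆ ⋃ j, D j) (hd : ℳ.PairwiseDisjoint id) {μ ν : Measure (Sp n)}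
    (h : ∀ T ∈ ℳ, μ T ≤ ν T) : μ (⋃₀ ℳ) ≤ ν (⋃₀ ℳ) :=
  have hm : ∀ T ∈ ℳ, MeasurableSet T := fun _ hT => (hD.isCZSet (hℳ hT)).measurableSet
  _root_.measure_sUnion_le_of_forall_le
    (hd.countable_of_measure_pos hm fun _ hT => (hD.isCZSet (hℳ hT)).volume_pos) hd hm h

theorem mul_volume_sUnion_le_lintegral (hD : IsDyadicGrid n D) {ℳ : Set (Set (Sp n))}
    (hℳ : ℳ ⊆ ⋃ j, D j) (hd : ℳ.PairwiseDisjoint id) {g : Sp n → ℝ≥0∞} {β : ℝ≥0∞}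
    (hβ : ∀ T ∈ ℳ, β ≤ (volume T)⁻¹ * ∫⁻ y in T, g y) :
    β * volume (⋃₀ ℳ) ≤ ∫⁻ y in ⋃₀ ℳ, g y := by
  have := hD.measure_sUnion_le_of_forall_le hℳ hd (μ := β • volume)
    (ν := volume.withDensity g) fun T hT => by
      rw [Measure.smul_apply, smul_eq_mul, withDensity_apply' g T]
      exact mul_measure_le_setLIntegral_of_le (hβ T hT)
  rwa [Measure.smul_apply, smul_eq_mul, withDensity_apply'] at this

theorem exists_parent_of_maximal (hD : IsDyadicGrid n D) {g : Sp n → ℝ≥0∞} {β : ℝ≥0∞}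
    (hR : Maximal (· ∈ averageSuperlevel (⋃ j, D j) g β) R) :
    ∃ M ∈ ⋃ j, D j, R ⊆ M ∧ volume M ≤ 2 ^ n * volume R ∧
      (volume M)⁻¹ * ∫⁻ y in M, g y ≤ β := by
  obtain ⟨j, hj⟩ := mem_iUnion.1 hR.prop.1
  obtain ⟨M, hM, hRM, hMR⟩ := hD.exists_parent hj
  have hM' : M ∈ ⋃ j, D j := mem_iUnion.2 ⟨j + 1, hM⟩
  exact ⟨M, hM', hRM.1, hMR, not_lt.1 fun hlt => hRM.2 (hR.2 ⟨hM', hlt⟩ hRM.1)⟩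

theorem inter_subset_sUnion_averageSuperlevel (hD : IsDyadicGrid n D) {f : Sp n → ℝ} {a : ℝ}
    {β γ : ℝ≥0∞} (ha : ENNReal.ofReal |a| ≤ β)
    (hR : Maximal (· ∈ averageSuperlevel (⋃ j, D j) (fun y => ‖f y‖₊) β) R) :
    {x | γ + β < maximalFn n (⋃ j, D j) f x} ∩ R ⊆
      ⋃₀ averageSuperlevel {T ∈ ⋃ j, D j | T ⊆ R} (fun y => ENNReal.ofReal |f y - a|) γ := by
  rintro x ⟨hx, hxR⟩
  obtain ⟨T, ⟨hT, hTavg⟩, hxT⟩ := (setOf_lt_maximalFn (𝒜 := ⋃ j, D j) (f := f) _).subset hx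
  have hTR : T ⊆ R := by
    rcases hD.subset_or_subset hT hR.prop.1 hxT hxR with h | h
    · exact h
    · exact hR.2 ⟨hT, le_add_self.trans_lt hTavg⟩ h
  have hcz := hD.isCZSet hT
  have hβ : β ≠ ∞ := (ENNReal.add_ne_top.1 (ne_top_of_lt hTavg)).2
  refine ⟨T, ⟨⟨hT, hTR⟩, ?_⟩, hxT⟩
  refine (ENNReal.add_lt_add_iff_right hβ).1 (hTavg.trans_le ?_)
  exact (setLAverage_nnnorm_le_add hcz.volume_pos.ne' hcz.volume_ne_top f a).trans
    (add_le_add_right ha _)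

theorem mul_volume_inter_le_lintegral (hD : IsDyadicGrid n D) {f : Sp n → ℝ} {a : ℝ}
    {β γ : ℝ≥0∞} (ha : ENNReal.ofReal |a| ≤ β)
    (hR : Maximal (· ∈ averageSuperlevel (⋃ j, D j) (fun y => ‖f y‖₊) β) R) :
    γ * volume ({x | γ + β < maximalFn n (⋃ j, D j) f x} ∩ R) ≤
      ∫⁻ y in R, ENNReal.ofReal |f y - a| := by
  set 𝒯 := averageSuperlevel {T ∈ ⋃ j, D j | T ⊆ R} (fun y => ENNReal.ofReal |f y - a|) γ
  have h𝒯 : 𝒯 ⊆ ⋃ j, D j := fun T hT => hT.1.1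
  have hcover := (hD.inter_subset_sUnion_averageSuperlevel ha hR).trans
    (hD.sUnion_subset_sUnion_maximal h𝒯 (hD.isCZSet hR.prop.1).volume_ne_top
      fun T hT => measure_mono hT.1.2)
  calc γ * volume ({x | γ + β < maximalFn n (⋃ j, D j) f x} ∩ R)
      ≤ γ * volume (⋃₀ {T | Maximal (· ∈ 𝒯) T}) := by gcongr
    _ ≤ ∫⁻ y in ⋃₀ {T | Maximal (· ∈ 𝒯) T}, ENNReal.ofReal |f y - a| :=
        hD.mul_volume_sUnion_le_lintegral (fun T hT => h𝒯 hT.prop)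
          (hD.pairwiseDisjoint_maximal h𝒯) fun T hT => hT.prop.2.le
    _ ≤ ∫⁻ y in R, ENNReal.ofReal |f y - a| :=
        lintegral_mono_set (sUnion_subset fun T hT => hT.prop.1.2)

theorem volume_inter_le_of_maximal (hD : IsDyadicGrid n D) {f : Sp n → ℝ} {b c α : ℝ}
    (hc : 0 ≤ c) (hb : 0 ≤ b) (hb1 : b < 1) (hα : 0 < α)
    (hR : Maximal (· ∈ averageSuperlevel (⋃ j, D j) (fun y => ‖f y‖₊) (ENNReal.ofReal (b * α)))
      R) :
    volume ({x | ENNReal.ofReal α < maximalFn n (⋃ j, D j) f x ∧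
        sharpFn n (⋃ j, D j) f x ≤ ENNReal.ofReal (c * α)} ∩ R)
      ≤ 2 ^ n * ENNReal.ofReal (c / (1 - b)) * volume R := by
  set E := {x | ENNReal.ofReal α < maximalFn n (⋃ j, D j) f x ∧
    sharpFn n (⋃ j, D j) f x ≤ ENNReal.ofReal (c * α)}
  rcases (E ∩ R).eq_empty_or_nonempty with hE | ⟨x₀, hx₀E, hx₀R⟩
  · simp [hE]
  obtain ⟨M, hM, hRM, hMR, hMavg⟩ := hD.exists_parent_of_maximal hR
  have hMcz := hD.isCZSet hM
  set a := (volume M).toReal⁻¹ * ∫ z in M, f z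
  have ha : ENNReal.ofReal |a| ≤ ENNReal.ofReal (b * α) := ENNReal.ofReal_le_ofReal
    (abs_setAverage_le (by positivity) hMcz.volume_pos.ne' hMcz.volume_ne_top hMavg)
  have hosc : ∫⁻ y in M, ENNReal.ofReal |f y - a| ≤ ENNReal.ofReal (c * α) * volume M := by
    rw [mul_comm]
    exact (ENNReal.inv_mul_le_iff hMcz.volume_pos.ne' hMcz.volume_ne_top).1
      ((le_sharpFn hM (hRM hx₀R)).trans hx₀E.2)
  have h1b : 0 < 1 - b := by linarith
  set γ := ENNReal.ofReal ((1 - b) * α)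
  have hαγ : ENNReal.ofReal α = γ + ENNReal.ofReal (b * α) := by
    rw [← ENNReal.ofReal_add (by positivity) (by positivity)]
    ring_nf
  have hcγ : ENNReal.ofReal (c * α) = ENNReal.ofReal (c / (1 - b)) * γ := by
    rw [← ENNReal.ofReal_mul (by positivity)]
    congr 1
    field_simp
  have hγE : γ * volume (E ∩ R) ≤ γ * (2 ^ n * ENNReal.ofReal (c / (1 - b)) * volume R) :=
    calc γ * volume (E ∩ R)
        ≤ γ * volume ({x | γ + ENNReal.ofReal (b * α) < maximalFn n (⋃ j, D j) f x} ∩ R) :=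
          mul_le_mul_right (measure_mono (inter_subset_inter_left R
            fun x hx => (hαγ ▸ hx.1 : _ < maximalFn n _ f x))) γ
      _ ≤ ∫⁻ y in R, ENNReal.ofReal |f y - a| := hD.mul_volume_inter_le_lintegral ha hR
      _ ≤ ∫⁻ y in M, ENNReal.ofReal |f y - a| := lintegral_mono_set hRM
      _ ≤ ENNReal.ofReal (c * α) * (2 ^ n * volume R) := hosc.trans (by gcongr)
      _ = γ * (2 ^ n * ENNReal.ofReal (c / (1 - b)) * volume R) := by rw [hcγ]; ring
  exact (ENNReal.mul_le_mul_iff_right (ENNReal.ofReal_pos.2 (by positivity)).ne'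
    ENNReal.ofReal_ne_top).1 hγE

theorem volume_le_mul_volume_sUnion (hD : IsDyadicGrid n D) {S : Set (Set (Sp n))}
    (hS : S ⊆ ⋃ j, D j) (hfin : volume (⋃₀ S) ≠ ∞) {E : Set (Sp n)} (hE : E ⊆ ⋃₀ S)
    {K : ℝ≥0∞} (hK : ∀ R, Maximal (· ∈ S) R → volume (E ∩ R) ≤ K * volume R) :
    volume E ≤ K * volume (⋃₀ S) := by
  set U := ⋃₀ {R | Maximal (· ∈ S) R}
  have hSU : ⋃₀ S ⊆ U := hD.sUnion_subset_sUnion_maximal hS hfin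
    fun T hT => measure_mono (subset_sUnion_of_mem hT)
  calc volume E ≤ volume.restrict E U := by
        simpa only [inter_eq_right.2 (hE.trans hSU)] using Measure.le_restrict_apply E U
    _ ≤ (K • volume : Measure (Sp n)) U :=
        hD.measure_sUnion_le_of_forall_le (fun R hR => hS hR.prop)
          (hD.pairwiseDisjoint_maximal hS) fun R hR => by
            rw [Measure.restrict_apply (hD.isCZSet (hS hR.prop)).measurableSet, inter_comm,
              Measure.smul_apply, smul_eq_mul]
            exact hK R hR
    _ ≤ K * volume (⋃₀ S) := by
        rw [Measure.smul_apply, smul_eq_mul]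
        exact mul_le_mul_right (measure_mono (sUnion_mono fun R hR => hR.prop)) _

end IsDyadicGrid

theorem relative_distributional_inequality_general (n : ℕ) :
    ∃ K : ℝ, 0 < K ∧ ∀ D : ℤ → Set (Set (Sp n)), IsDyadicGrid n D →
      ∀ f : Sp n → ℝ, LocallyIntegrable f volume →
      ∀ c b : ℝ, 0 < c → 0 < b → b < 1 → ∀ α : ℝ, 0 < α →
        volume {x : Sp n | ENNReal.ofReal α < maximalFn n (⋃ j, D j) f x ∧
            sharpFn n (⋃ j, D j) f x ≤ ENNReal.ofReal (c * α)}
          ≤ ENNReal.ofReal (K * c / (1 - b)) *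
            volume {x : Sp n | ENNReal.ofReal (b * α) < maximalFn n (⋃ j, D j) f x} := by
  refine ⟨2 ^ n, by positivity, fun D hD f _ c b hc hb hb1 α hα => ?_⟩
  have hK : ENNReal.ofReal (2 ^ n * c / (1 - b)) = 2 ^ n * ENNReal.ofReal (c / (1 - b)) := by
    rw [mul_div_assoc, ENNReal.ofReal_mul (by positivity), ENNReal.ofReal_pow zero_le_two,
      ENNReal.ofReal_ofNat]
  rw [setOf_lt_maximalFn, hK]
  rcases eq_or_ne (volume (⋃₀ averageSuperlevel (⋃ j, D j) (fun y => ‖f y‖₊)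
    (ENNReal.ofReal (b * α)))) ∞ with htop | hfin
  · rw [htop, ENNReal.mul_top]
    · exact le_top
    · exact mul_ne_zero (by simp) (ENNReal.ofReal_pos.2 (div_pos hc (by linarith))).ne'
  refine hD.volume_le_mul_volume_sUnion (fun R hR => hR.1) hfin (fun x hx => ?_)
    fun R hR => hD.volume_inter_le_of_maximal hc.le hb.le hb1 hα hR
  exact (setOf_lt_maximalFn (ENNReal.ofReal (b * α))).subset
    ((ENNReal.ofReal_le_ofReal (by nlinarith)).trans_lt hx.1 : _ < maximalFn n _ f x)

/-- relative distributional inequality. There exists `K > 0`, depending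
only on `n`, such that for every dyadic grid, every locally integrable `f`, all `c > 0`,
`0 < b < 1` and `α > 0`,
`ρ({ℳ_𝒟 f > α, f♯_𝒟 ≤ cα}) ≤ K (c/(1−b)) ρ({ℳ_𝒟 f > bα})`. -/
theorem relative_distributional_inequality (n : ℕ) (hn : 1 ≤ n) :
    ∃ K : ℝ, 0 < K ∧ ∀ D : ℤ → Set (Set (Sp n)), IsDyadicGrid n D →
      ∀ f : Sp n → ℝ, LocallyIntegrable f volume →
      ∀ c b : ℝ, 0 < c → 0 < b → b < 1 → ∀ α : ℝ, 0 < α →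
        volume {x : Sp n | ENNReal.ofReal α < maximalFn n (⋃ j, D j) f x ∧
            sharpFn n (⋃ j, D j) f x ≤ ENNReal.ofReal (c * α)}
          ≤ ENNReal.ofReal (K * c / (1 - b)) *
            volume {x : Sp n | ENNReal.ofReal (b * α) < maximalFn n (⋃ j, D j) f x} :=
  relative_distributional_inequality_general n
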